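/- arXiv:1904.09649 — 2 statements merged into one kernel-verified Lean document; each statement's English description precedes it below -/
import Mathlib

section
/- Let 0 ≤ i ≤ j be integers and define the bilinear form Q : ℂ^{j+1} × ℂ^{j+1} → ℂ by Q(z,w) = ∑_{k=0}^{i} z_k w_k (coordinates indexed 0,…,j). Let A ∈ GL_{i+1}(ℂ) and let Ã ∈ GL_{j+1}(ℂ) be the block-diagonal matrix diag(A, Id_{j−i}) with respect to the decomposition ℂ^{j+1} = span(e_0,…,e_i) ⊕ span(e_{i+1},…,e_j). Suppose B ∈ GL_{j+1}(ℂ) is such that for all z, w ∈ ℂ^{j+1}, Q(z,w) = 0 implies Q(Ãz, Bw) = 0. Then B_{m,k} = 0 for all indices m ≤ i < k (equivalently, B maps span(e_{i+1},…,e_j) into itself), and there exists a nonzero scalar λ ∈ ℂ such that the top-left (i+1)×(i+1) block (B_{m,k})_{0 ≤ m,k ≤ i} equals λ·(Aᵀ)^{−1}; in particular the bottom-right (j−i)×(j−i) block B' := (B_{m,k})_{i < m,k ≤ j} is invertible. -/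
section aux
variable (i j : ℕ)

/-- splitting a truncated sum over `Fin (j+1)` into a sum over `Fin (i+1)` -/
lemma milnor_sum_split (hij : i ≤ j) (f : Fin (j + 1) → ℂ) :
    (∑ l : Fin (j + 1), if (l : ℕ) ≤ i then f l else 0)
      = ∑ l : Fin (i + 1), f (Fin.castLE (Nat.succ_le_succ hij) l) := by
  have h1 : (i + 1) + (j - i) = j + 1 := by omega
  let e : Fin (i + 1) ⊕ Fin (j - i) ≃ Fin (j + 1) := finSumFinEquiv.trans (finCongr h1)
  rw [← Fintype.sum_equiv e (fun s => if ((e s : Fin (j+1)) : ℕ) ≤ i then f (e s) else 0)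
      (fun l => if (l : ℕ) ≤ i then f l else 0) (fun s => rfl)]
  rw [Fintype.sum_sum_type]
  have he1 : ∀ m : Fin (i + 1), (e (Sum.inl m) : ℕ) = (m : ℕ) := by
    intro m; simp [e, finSumFinEquiv]
  have he2 : ∀ m : Fin (j - i), (e (Sum.inr m) : ℕ) = i + 1 + (m : ℕ) := by
    intro m; simp [e, finSumFinEquiv]
  have h2 : (∑ m : Fin (j - i),
      if ((e (Sum.inr m) : Fin (j+1)) : ℕ) ≤ i then f (e (Sum.inr m)) else 0) = 0 := by
    apply Finset.sum_eq_zero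
    intro m _
    rw [if_neg]
    rw [he2]; omega
  rw [h2, add_zero]
  apply Finset.sum_congr rfl
  intro m _
  have hm : e (Sum.inl m) = Fin.castLE (by omega : i + 1 ≤ j + 1) m := by
    apply Fin.ext; rw [he1]; rfl
  rw [hm, if_pos (by simpa using Nat.lt_succ_iff.mp m.isLt)]
end aux

/-- the key matrix lemma for the automorphism group of the Milnor
hypersurface `H_{i,j}`.  `Q(z,w) = ∑_{k=0}^{i} z_k w_k` on `ℂ^{j+1}`, `Ã = diag(A, Id)`,
and `B` satisfies `Q(z,w) = 0 → Q(Ãz, Bw) = 0`.  Then `B` maps `span(e_{i+1},…,e_j)`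
into itself, its top-left block is `λ·(Aᵀ)⁻¹` for some `λ ≠ 0`, and its bottom-right
block is invertible. -/
theorem milnor_matrix_lemma (i j : ℕ) (hij : i ≤ j)
    (A : Matrix (Fin (i + 1)) (Fin (i + 1)) ℂ) (hA : IsUnit A.det)
    (Atil : Matrix (Fin (j + 1)) (Fin (j + 1)) ℂ)
    (hAtil : ∀ m k : Fin (j + 1),
      Atil m k =
        if hm : (m : ℕ) ≤ i then
          (if hk : (k : ℕ) ≤ i then A ⟨(m : ℕ), by omega⟩ ⟨(k : ℕ), by omega⟩ else 0)
        else (if m = k then 1 else 0))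
    (B : Matrix (Fin (j + 1)) (Fin (j + 1)) ℂ) (hB : IsUnit B.det)
    (hQ : ∀ z w : Fin (j + 1) → ℂ,
      (∑ k : Fin (j + 1), if (k : ℕ) ≤ i then z k * w k else 0) = 0 →
      (∑ k : Fin (j + 1), if (k : ℕ) ≤ i then
        Atil.mulVec z k * B.mulVec w k else 0) = 0) :
    (∀ m k : Fin (j + 1), (m : ℕ) ≤ i → i < (k : ℕ) → B m k = 0) ∧
    (∃ lam : ℂ, lam ≠ 0 ∧ ∀ m k : Fin (i + 1),
      B (Fin.castLE (by omega) m) (Fin.castLE (by omega) k) = lam * (A.transpose)⁻¹ m k) ∧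
    IsUnit (Matrix.det (fun m k : Fin (j - i) =>
      B ⟨i + 1 + (m : ℕ), by have := m.isLt; omega⟩
        ⟨i + 1 + (k : ℕ), by have := k.isLt; omega⟩)) := by
  classical
  -- the matrix M = Ãᵀ P B
  set M : Matrix (Fin (j + 1)) (Fin (j + 1)) ℂ :=
    fun p q => ∑ l : Fin (j + 1), if (l : ℕ) ≤ i then Atil l p * B l q else 0 with hMdef
  -- Step 1: basis vectors give the off-diagonal / far-diagonal vanishing
  have hbasis : ∀ p q : Fin (j + 1),
      (∑ k : Fin (j + 1), if (k : ℕ) ≤ i then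
        Atil.mulVec (Pi.single p 1 : Fin (j+1) → ℂ) k * B.mulVec (Pi.single q 1 : Fin (j+1) → ℂ) k else 0) = M p q := by
    intro p q
    simp [Matrix.mulVec_single, hMdef]
  have hoff : ∀ p q : Fin (j + 1), ¬((p : ℕ) ≤ i ∧ p = q) → M p q = 0 := by
    intro p q hpq
    have h0 : (∑ k : Fin (j + 1), if (k : ℕ) ≤ i then
        (Pi.single p 1 : Fin (j+1) → ℂ) k * (Pi.single q 1 : Fin (j+1) → ℂ) k else 0) = 0 := by
      apply Finset.sum_eq_zero
      intro k _
      simp only [Pi.single_apply]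
      split_ifs with h1 h2 h3 <;> try ring
      exact absurd ⟨h2 ▸ h1, h2.symm.trans h3⟩ hpq
    have := hQ (Pi.single p 1) (Pi.single q 1) h0
    rwa [hbasis] at this
  -- Step 2: all (relevant) diagonal entries of M are equal
  have hdiag : ∀ p p' : Fin (j + 1), (p : ℕ) ≤ i → (p' : ℕ) ≤ i → p ≠ p' →
      M p p = M p' p' := by
    intro p p' hp hp' hne
    have hs : ∀ r : Fin (j + 1), (r : ℕ) ≤ i →
        (∑ k : Fin (j + 1), if (k : ℕ) ≤ i then (Pi.single r 1 : Fin (j+1) → ℂ) k else 0)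
          = 1 := by
      intro r hr
      rw [Finset.sum_eq_single r]
      · simp [hr]
      · intro b _ hbr; simp [Pi.single_apply, hbr]
      · simp
    have h0 : (∑ k : Fin (j + 1), if (k : ℕ) ≤ i then
        (Pi.single p 1 + Pi.single p' 1 : Fin (j+1) → ℂ) k *
        (Pi.single p 1 - Pi.single p' 1 : Fin (j+1) → ℂ) k else 0) = 0 := by
      have hterm : ∀ k : Fin (j + 1),
          (if (k : ℕ) ≤ i then (Pi.single p 1 + Pi.single p' 1 : Fin (j+1) → ℂ) k *
            (Pi.single p 1 - Pi.single p' 1 : Fin (j+1) → ℂ) k else 0)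
          = (if (k : ℕ) ≤ i then (Pi.single p 1 : Fin (j+1) → ℂ) k else 0)
            - (if (k : ℕ) ≤ i then (Pi.single p' 1 : Fin (j+1) → ℂ) k else 0) := by
        intro k
        by_cases hk : (k : ℕ) ≤ i
        · simp only [if_pos hk, Pi.add_apply, Pi.sub_apply, Pi.single_apply]
          by_cases h1 : k = p
          · have h2 : ¬ (k = p') := fun h2 => hne (h1 ▸ h2 ▸ rfl)
            rw [if_pos h1, if_neg h2]; ring
          · rw [if_neg h1]
            by_cases h2 : k = p'
            · rw [if_pos h2]; ring
            · rw [if_neg h2]; ring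
        · simp [hk]
      rw [Finset.sum_congr rfl (fun k _ => hterm k), Finset.sum_sub_distrib,
        hs p hp, hs p' hp', sub_self]
    have hterm2 : ∀ k : Fin (j + 1),
        (if (k : ℕ) ≤ i then (Atil k p * 1 + Atil k p' * 1) * (B k p * 1 - B k p' * 1) else 0)
        = ((if (k : ℕ) ≤ i then Atil k p * B k p else 0)
            - (if (k : ℕ) ≤ i then Atil k p * B k p' else 0))
          + ((if (k : ℕ) ≤ i then Atil k p' * B k p else 0)
            - (if (k : ℕ) ≤ i then Atil k p' * B k p' else 0)) := by
      intro k; split_ifs <;> ring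
    have hF := hQ (Pi.single p 1 + Pi.single p' 1 : Fin (j+1) → ℂ)
      (Pi.single p 1 - Pi.single p' 1 : Fin (j+1) → ℂ) h0
    simp only [Matrix.mulVec_add, Matrix.mulVec_sub, Matrix.mulVec_single,
      Pi.add_apply, Pi.sub_apply, Pi.smul_apply, op_smul_eq_mul, Matrix.col_apply] at hF
    rw [Finset.sum_congr rfl (fun k _ => hterm2 k), Finset.sum_add_distrib,
      Finset.sum_sub_distrib, Finset.sum_sub_distrib] at hF
    have hoff1 : M p p' = 0 := hoff p p' (by rintro ⟨-, rfl⟩; exact hne rfl)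
    have hoff2 : M p' p = 0 := hoff p' p (by rintro ⟨-, h⟩; exact hne h.symm)
    have hF' : M p p - M p p' + (M p' p - M p' p') = 0 := hF
    rw [hoff1, hoff2] at hF'
    linear_combination hF'
  -- the scalar
  set lam : ℂ := M ⟨0, by omega⟩ ⟨0, by omega⟩ with hlamdef
  have hMval : ∀ p q : Fin (j + 1), M p q = if ((p : ℕ) ≤ i ∧ p = q) then lam else 0 := by
    intro p q
    by_cases h : (p : ℕ) ≤ i ∧ p = q
    · rw [if_pos h]
      obtain ⟨hp, rfl⟩ := h
      by_cases hp0 : p = ⟨0, by omega⟩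
      · rw [hp0]
      · exact hdiag p ⟨0, by omega⟩ hp (by simp) hp0
    · rw [if_neg h]; exact hoff p q h
  -- translate to block matrix equations
  set cst : Fin (i + 1) → Fin (j + 1) := Fin.castLE (by omega) with hcstdef
  have hcstle : ∀ l : Fin (i + 1), ((cst l : Fin (j + 1)) : ℕ) ≤ i := by
    intro l; simpa [hcstdef] using Nat.lt_succ_iff.mp l.isLt
  have hAc : ∀ l' p : Fin (i + 1), Atil (cst l') (cst p) = A l' p := by
    intro l' p
    rw [hAtil, dif_pos (hcstle l'), dif_pos (hcstle p)]
    rfl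
  have hMc : ∀ (p : Fin (i + 1)) (q : Fin (j + 1)),
      (∑ l' : Fin (i + 1), A l' p * B (cst l') q) = M (cst p) q := by
    intro p q
    have hMu : M (cst p) q
        = ∑ l : Fin (j + 1), if (l : ℕ) ≤ i then Atil l (cst p) * B l q else 0 := rfl
    rw [hMu, milnor_sum_split i j hij (fun l => Atil l (cst p) * B l q)]
    refine Finset.sum_congr rfl (fun l _ => ?_)
    show A l p * B (cst l) q = Atil (cst l) (cst p) * B (cst l) q
    rw [hAc]
  set B1 : Matrix (Fin (i + 1)) (Fin (i + 1)) ℂ := fun l q => B (cst l) (cst q) with hB1def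
  set N : Matrix (Fin (i + 1)) (Fin (j - i)) ℂ :=
    fun l q => B (cst l) ⟨i + 1 + (q : ℕ), by have := q.isLt; omega⟩ with hNdef
  have hAT : IsUnit A.transpose.det := by rwa [Matrix.det_transpose]
  have hB1 : A.transpose * B1 = lam • (1 : Matrix (Fin (i + 1)) (Fin (i + 1)) ℂ) := by
    ext p q
    have h1 : (A.transpose * B1) p q = M (cst p) (cst q) := by
      rw [← hMc, Matrix.mul_apply]
      refine Finset.sum_congr rfl (fun l _ => ?_)
      show A.transpose p l * B1 l q = A l p * B (cst l) (cst q)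
      rw [Matrix.transpose_apply]
    rw [h1, hMval]
    have : ((cst p : Fin (j+1)) : ℕ) ≤ i ∧ cst p = cst q ↔ p = q := by
      constructor
      · rintro ⟨-, h⟩; exact Fin.castLE_injective _ h
      · rintro rfl; exact ⟨hcstle p, rfl⟩
    simp only [Matrix.smul_apply, Matrix.one_apply, smul_eq_mul, mul_ite, mul_one, mul_zero]
    by_cases hpq : p = q
    · rw [if_pos (this.mpr hpq), if_pos hpq]
    · rw [if_neg (fun h => hpq (this.mp h)), if_neg hpq]
  have hN : A.transpose * N = 0 := by
    ext p q
    have h1 : (A.transpose * N) p q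
        = M (cst p) ⟨i + 1 + (q : ℕ), by have := q.isLt; omega⟩ := by
      rw [← hMc, Matrix.mul_apply]
      refine Finset.sum_congr rfl (fun l _ => ?_)
      show A.transpose p l * N l q = A l p * B (cst l) _
      rw [Matrix.transpose_apply]
    rw [h1, hMval, if_neg, Matrix.zero_apply]
    rintro ⟨hle, heq⟩
    have := congrArg (fun x : Fin (j + 1) => (x : ℕ)) heq
    simp [hcstdef] at this
    omega
  have hB1eq : B1 = lam • A.transpose⁻¹ := by
    calc B1 = A.transpose⁻¹ * (A.transpose * B1) := by
            rw [Matrix.nonsing_inv_mul_cancel_left _ _ hAT]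
      _ = A.transpose⁻¹ * (lam • 1) := by rw [hB1]
      _ = lam • A.transpose⁻¹ := by rw [Matrix.mul_smul, Matrix.mul_one]
  have hNeq : N = 0 := by
    calc N = A.transpose⁻¹ * (A.transpose * N) := by
            rw [Matrix.nonsing_inv_mul_cancel_left _ _ hAT]
      _ = 0 := by rw [hN, Matrix.mul_zero]
  -- conclusion 1
  have conc1 : ∀ m k : Fin (j + 1), (m : ℕ) ≤ i → i < (k : ℕ) → B m k = 0 := by
    intro m k hm hk
    have hm' : m = cst ⟨(m : ℕ), by omega⟩ := Fin.ext rfl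
    have hk' : k = (⟨i + 1 + ((k : ℕ) - i - 1), by have := k.isLt; omega⟩ : Fin (j + 1)) :=
      Fin.ext (by simp; omega)
    rw [hm', hk']
    have := congrFun (congrFun hNeq ⟨(m : ℕ), by omega⟩)
      ⟨(k : ℕ) - i - 1, by have := k.isLt; omega⟩
    simpa [hNdef] using this
  refine ⟨conc1, ?_, ?_⟩
  · -- lam ≠ 0 and the top-left block
    have hlamne : lam ≠ 0 := by
      intro hlam0
      have hB10 : B1 = 0 := by rw [hB1eq, hlam0, zero_smul]
      have hrow : ∀ k : Fin (j + 1), B ⟨0, by omega⟩ k = 0 := by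
        intro k
        by_cases hk : (k : ℕ) ≤ i
        · have hk' : k = cst ⟨(k : ℕ), by omega⟩ := Fin.ext rfl
          have h0' : (⟨0, by omega⟩ : Fin (j + 1)) = cst ⟨0, by omega⟩ := Fin.ext rfl
          rw [hk', h0']
          have := congrFun (congrFun hB10 ⟨0, by omega⟩) ⟨(k : ℕ), by omega⟩
          simpa [hB1def] using this
        · exact conc1 _ _ (by simp) (by omega)
      have : B.det = 0 := Matrix.det_eq_zero_of_row_eq_zero _ hrow
      rw [this] at hB
      simp at hB
    refine ⟨lam, hlamne, fun m k => ?_⟩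
    have := congrFun (congrFun hB1eq m) k
    simpa [hB1def, Matrix.smul_apply, smul_eq_mul] using this
  · -- conclusion 3
    have h1 : (i + 1) + (j - i) = j + 1 := by omega
    set e : Fin (i + 1) ⊕ Fin (j - i) ≃ Fin (j + 1) :=
      finSumFinEquiv.trans (finCongr h1) with hedef
    set B2 : Matrix (Fin (j - i)) (Fin (j - i)) ℂ :=
      fun m k => B ⟨i + 1 + (m : ℕ), by have := m.isLt; omega⟩
        ⟨i + 1 + (k : ℕ), by have := k.isLt; omega⟩ with hB2def
    set C : Matrix (Fin (j - i)) (Fin (i + 1)) ℂ :=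
      fun m k => B ⟨i + 1 + (m : ℕ), by have := m.isLt; omega⟩ (cst k) with hCdef
    have he1 : ∀ m : Fin (i + 1), e (Sum.inl m) = cst m := by
      intro m; apply Fin.ext; simp [hedef, hcstdef]
    have he2 : ∀ m : Fin (j - i),
        e (Sum.inr m) = (⟨i + 1 + (m : ℕ), by have := m.isLt; omega⟩ : Fin (j + 1)) := by
      intro m; apply Fin.ext; simp [hedef]
    have hsub : B.submatrix e e = Matrix.fromBlocks B1 N C B2 := by
      ext s t
      cases s with
      | inl m =>
        cases t with
        | inl k =>
          rw [Matrix.submatrix_apply, he1, he1]; rfl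
        | inr k =>
          rw [Matrix.submatrix_apply, he1, he2]; rfl
      | inr m =>
        cases t with
        | inl k =>
          rw [Matrix.submatrix_apply, he2, he1]; rfl
        | inr k =>
          rw [Matrix.submatrix_apply, he2, he2]; rfl
    have hdet : B.det = B1.det * B2.det := by
      rw [← Matrix.det_submatrix_equiv_self e, hsub, hNeq, Matrix.det_fromBlocks_zero₁₂]
    rw [hdet] at hB
    exact isUnit_of_mul_isUnit_right hB
end

section
/- Let i > j ≥ 0 be integers and u = (u_1,…,u_i) ∈ {0,1}^i. Define a_0(u) := 0, a_q(u) := max({0} ∪ {r : 1 ≤ r ≤ q, u_r = 1}), and b_q(u) := a_{q−1}(u) if u_q = 1, b_q(u) := q if u_q = 0. Let e_1,…,e_i be the standard basis of ℚ^i and set e_0 := 0. Assume a_i(u) < i − j, and fix an integer k with 0 ≤ k ≤ j. Then the i + j − 1 vectors e_{b_q(u)} − e_{a_q(u)} for 1 ≤ q ≤ i with q ≠ k + i − j, together with e_{k+i−j} − e_{r+i−j} for 0 ≤ r ≤ j with r ≠ k, are all nonzero and pairwise linearly independent over ℚ (no one is a rational multiple of another). -/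
/-- `a_q(u) = max({0} ∪ {r : 1 ≤ r ≤ q, u_r = 1})`. -/
def aF (u : ℕ → Bool) (q : ℕ) : ℕ :=
  ((Finset.Icc 1 q).filter (fun r => u r = true)).sup id

/-- `b_q(u) = a_{q-1}(u)` if `u_q = 1`, and `b_q(u) = q` if `u_q = 0`. -/
def bF (u : ℕ → Bool) (q : ℕ) : ℕ :=
  if u q = true then aF u (q - 1) else q

/-- Standard basis vectors of `ℚ^i`, 1-indexed: `stdE i r = e_r` for
`1 ≤ r ≤ i` and `stdE i 0 = e_0 = 0`. -/
def stdE (i r : ℕ) : Fin i → ℚ :=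
  fun m => if (m : ℕ) + 1 = r then 1 else 0

lemma aF_le (u : ℕ → Bool) (q : ℕ) : aF u q ≤ q := by
  apply Finset.sup_le
  intro r hr
  simp only [Finset.mem_filter, Finset.mem_Icc] at hr
  exact hr.1.2

lemma aF_mono (u : ℕ → Bool) {q q' : ℕ} (h : q ≤ q') : aF u q ≤ aF u q' := by
  apply Finset.sup_mono
  exact Finset.filter_subset_filter _ (Finset.Icc_subset_Icc_right h)

lemma bF_cases (u : ℕ → Bool) (q : ℕ) (h1 : 1 ≤ q) :
    (aF u q = q ∧ bF u q = aF u (q - 1)) ∨ (bF u q = q ∧ aF u q = aF u (q - 1)) := by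
  unfold bF
  cases hu : u q with
  | true =>
    left
    refine ⟨le_antisymm (aF_le u q) ?_, by simp⟩
    exact Finset.le_sup (f := id) (by simp [Finset.mem_Icc, h1, hu])
  | false =>
    right
    refine ⟨by simp, ?_⟩
    unfold aF
    congr 1
    ext r
    simp only [Finset.mem_filter, Finset.mem_Icc]
    constructor
    · rintro ⟨⟨hra, hrb⟩, hr⟩
      have hrq : r ≠ q := fun e => by rw [e, hu] at hr; exact absurd hr (by simp)
      exact ⟨⟨hra, by omega⟩, hr⟩
    · rintro ⟨⟨hra, hrb⟩, hr⟩
      exact ⟨⟨hra, by omega⟩, hr⟩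

lemma stdE_sub_ne_zero (i p m : ℕ) (hp : p ≤ i) (hm : m ≤ i) (hpm : p ≠ m) :
    stdE i p - stdE i m ≠ 0 := by
  intro h0
  rcases hpm.lt_or_gt with h | h
  · have hh := congrFun h0 ⟨m - 1, by omega⟩
    simp only [Pi.sub_apply, Pi.zero_apply, stdE, Fin.val_mk] at hh
    rw [if_neg (by omega : ¬ (m - 1 + 1 = p)), if_pos (by omega : m - 1 + 1 = m)] at hh
    norm_num at hh
  · have hh := congrFun h0 ⟨p - 1, by omega⟩
    simp only [Pi.sub_apply, Pi.zero_apply, stdE, Fin.val_mk] at hh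
    rw [if_pos (by omega : p - 1 + 1 = p), if_neg (by omega : ¬ (p - 1 + 1 = m))] at hh
    norm_num at hh

lemma key (i p m p' m' : ℕ) (hp : p ≤ i) (hm : m ≤ i) (hp' : p' ≤ i) (hm' : m' ≤ i)
    (hpm : p ≠ m) (hpm' : p' ≠ m')
    (h1 : ¬(p = p' ∧ m = m')) (h2 : ¬(p = m' ∧ m = p')) :
    ¬ ∃ c : ℚ, stdE i p - stdE i m = c • (stdE i p' - stdE i m') := by
  rintro ⟨c, hc⟩
  have key4 : (1 ≤ p ∧ p ≠ p' ∧ p ≠ m') ∨ (1 ≤ m ∧ m ≠ p' ∧ m ≠ m') ∨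
      (1 ≤ p' ∧ p' ≠ p ∧ p' ≠ m) ∨ (1 ≤ m' ∧ m' ≠ p ∧ m' ≠ m) := by omega
  have eval : ∀ s : ℕ, 1 ≤ s → s ≤ i →
      (if s = p then (1 : ℚ) else 0) - (if s = m then 1 else 0)
        = c * ((if s = p' then 1 else 0) - (if s = m' then 1 else 0)) := by
    intro s h1s hsi
    have hh := congrFun hc ⟨s - 1, by omega⟩
    simp only [Pi.sub_apply, Pi.smul_apply, smul_eq_mul, stdE, Fin.val_mk] at hh
    rw [show s - 1 + 1 = s from by omega] at hh
    exact hh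
  rcases key4 with ⟨hs, hne1, hne2⟩ | ⟨hs, hne1, hne2⟩ | ⟨hs, hne1, hne2⟩ | ⟨hs, hne1, hne2⟩
  · have hv := eval p hs hp
    rw [if_pos rfl, if_neg hpm, if_neg hne1, if_neg hne2] at hv
    norm_num at hv
  · have hv := eval m hs hm
    rw [if_neg (Ne.symm hpm), if_pos rfl, if_neg hne1, if_neg hne2] at hv
    norm_num at hv
  · have hv := eval p' hs hp'
    rw [if_neg hne1, if_neg hne2, if_pos rfl, if_neg hpm'] at hv
    have hc0 : c = 0 := by linarith [hv]
    apply stdE_sub_ne_zero i p m hp hm hpm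
    rw [hc, hc0, zero_smul]
  · have hv := eval m' hs hm'
    rw [if_neg hne1, if_neg hne2, if_neg (Ne.symm hpm'), if_pos rfl] at hv
    have hc0 : c = 0 := by linarith [hv]
    apply stdE_sub_ne_zero i p m hp hm hpm
    rw [hc, hc0, zero_smul]

/-- let `i > j ≥ 0`, `u ∈ {0,1}^i` with `a_i(u) < i − j`, and `0 ≤ k ≤ j`.
Then the `i + j − 1` vectors `e_{b_q(u)} − e_{a_q(u)}` (`1 ≤ q ≤ i`, `q ≠ k+i−j`)
together with `e_{k+i−j} − e_{r+i−j}` (`0 ≤ r ≤ j`, `r ≠ k`) are all nonzero and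
pairwise linearly independent over `ℚ` (no one is a rational multiple of another).
These are the weights of the torus action on `BR_{i,j}` at the fixed point `x_{u,k}`. -/
theorem BR_weights_pairwise_independent (i j k : ℕ) (hij : j < i) (hk : k ≤ j)
    (u : ℕ → Bool) (ha : aF u i < i - j)
    (F : ℕ ⊕ ℕ → Fin i → ℚ)
    (hF : F = Sum.elim
      (fun q => stdE i (bF u q) - stdE i (aF u q))
      (fun r => stdE i (k + i - j) - stdE i (r + i - j)))
    (Valid : ℕ ⊕ ℕ → Prop)
    (hV : Valid = Sum.elim
      (fun q => 1 ≤ q ∧ q ≤ i ∧ q ≠ k + i - j)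
      (fun r => r ≤ j ∧ r ≠ k)) :
    (∀ x, Valid x → F x ≠ 0) ∧
    (∀ x y, Valid x → Valid y → x ≠ y → ¬ ∃ c : ℚ, F x = c • F y) := by
  subst hF hV
  constructor
  · rintro (q | r) hx
    · obtain ⟨hq1, hqi, hqk⟩ := hx
      have hA : aF u (q - 1) ≤ q - 1 := aF_le u (q - 1)
      simp only [Sum.elim_inl]
      obtain ⟨e1, e2⟩ | ⟨e1, e2⟩ := bF_cases u q hq1 <;> rw [e1, e2] <;>
        exact stdE_sub_ne_zero i _ _ (by omega) (by omega) (by omega)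
    · obtain ⟨hr, hrk⟩ := hx
      simp only [Sum.elim_inr]
      exact stdE_sub_ne_zero i _ _ (by omega) (by omega) (by omega)
  · rintro (q | r) (q' | r') hx hy hxy
    · obtain ⟨hq1, hqi, hqk⟩ := hx
      obtain ⟨hq'1, hq'i, hq'k⟩ := hy
      have hqq' : q ≠ q' := by simpa using hxy
      have hA : aF u (q - 1) ≤ q - 1 := aF_le u (q - 1)
      have hA' : aF u (q' - 1) ≤ q' - 1 := aF_le u (q' - 1)
      simp only [Sum.elim_inl]
      obtain ⟨e1, e2⟩ | ⟨e1, e2⟩ := bF_cases u q hq1 <;>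
        obtain ⟨f1, f2⟩ | ⟨f1, f2⟩ := bF_cases u q' hq'1 <;>
        rw [e1, e2, f1, f2] <;>
        exact key i _ _ _ _ (by omega) (by omega) (by omega) (by omega) (by omega)
          (by omega) (by omega) (by omega)
    · obtain ⟨hq1, hqi, hqk⟩ := hx
      obtain ⟨hr', hr'k⟩ := hy
      have hA : aF u (q - 1) ≤ q - 1 := aF_le u (q - 1)
      have haq : aF u (q - 1) < i - j := lt_of_le_of_lt (aF_mono u (by omega)) ha
      simp only [Sum.elim_inl, Sum.elim_inr]
      obtain ⟨e1, e2⟩ | ⟨e1, e2⟩ := bF_cases u q hq1 <;>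
        rw [e1, e2] <;>
        exact key i _ _ _ _ (by omega) (by omega) (by omega) (by omega) (by omega)
          (by omega) (by omega) (by omega)
    · obtain ⟨hr, hrk⟩ := hx
      obtain ⟨hq1, hqi, hqk⟩ := hy
      have hA : aF u (q' - 1) ≤ q' - 1 := aF_le u (q' - 1)
      have haq : aF u (q' - 1) < i - j := lt_of_le_of_lt (aF_mono u (by omega)) ha
      simp only [Sum.elim_inl, Sum.elim_inr]
      obtain ⟨e1, e2⟩ | ⟨e1, e2⟩ := bF_cases u q' hq1 <;>
        rw [e1, e2] <;>
        exact key i _ _ _ _ (by omega) (by omega) (by omega) (by omega) (by omega)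
          (by omega) (by omega) (by omega)
    · obtain ⟨hr, hrk⟩ := hx
      obtain ⟨hr', hr'k⟩ := hy
      have hrr' : r ≠ r' := by simpa using hxy
      simp only [Sum.elim_inr]
      exact key i _ _ _ _ (by omega) (by omega) (by omega) (by omega) (by omega)
        (by omega) (by omega) (by omega)
end
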